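/- For any tree T, the nullity of T (multiplicity of eigenvalue 0 of its adjacency matrix) equals n - 2ν(T), where n is the number of vertices and ν(T) the matching number. -/

import Mathlib

open SimpleGraph Finset

def IsMatchingF {V : Type*} (G : SimpleGraph V) (M : Finset (Sym2 V)) : Prop :=
  (∀ e ∈ M, e ∈ G.edgeSet) ∧
  ∀ e ∈ M, ∀ f ∈ M, e ≠ f → ∀ v : V, ¬(v ∈ e ∧ v ∈ f)

noncomputable def matchNum {V : Type*} (G : SimpleGraph V) : ℕ :=
  sSup {k | ∃ M : Finset (Sym2 V), IsMatchingF G M ∧ M.card = k}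

/-!
Let `u` be a leaf of a forest `G` with neighbour `v`, and let `H` be `G` with all edges at `v`
removed. Then `ν(G) = ν(H) + 1`: a matching of `G` meets `v` at most once, and `uv` extends any
matching of `H`. And `rank A_G = rank A_H + 2`: since `(A_G x) u = x v`, the kernel of `A_G` is the
part of the kernel of `A_H` on which the two functionals `x ↦ x v` and `x ↦ (A_G x) v` vanish, and
these are independent there, being separated by the indicator vectors of `v` and `u`. Induction
on the subgraph order gives `rank A_G = 2 ν(G)` for every finite forest.
-/

open Module LinearMap Matrix

theorem SimpleGraph.IsAcyclic.exists_neighborSet_eq_singleton {V : Type*} [Finite V]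
    {G : SimpleGraph V} (hG : G.IsAcyclic) (hne : G ≠ ⊥) : ∃ u v, G.neighborSet u = {v} := by
  obtain ⟨a, b, hab⟩ := ne_bot_iff_exists_adj.1 hne
  have : Nonempty V := ⟨a⟩
  obtain ⟨u, _, p, hp, hmax⟩ := Walk.exists_isPath_forall_isPath_length_le_length G
  have hnil : ¬p.Nil := fun h => by
    simpa [h.length_eq_zero] using hmax a b _ (Path.singleton hab).2
  refine ⟨u, p.snd, Set.ext fun w => ⟨fun hw => ?_, fun hw => hw ▸ p.adj_snd hnil⟩⟩
  -- otherwise `w` would extend the longest path `p`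
  refine hG.eq_snd_of_adj_start hp hw (by_contra fun hw' => ?_)
  simpa using hmax _ _ _ (hp.cons (h := hw.symm) hw')

section Matching

variable {V : Type*} {G H : SimpleGraph V} {M N : Finset (Sym2 V)}

theorem IsMatchingF.of_subset (hM : IsMatchingF G M) (hNM : N ⊆ M)
    (hN : ∀ e ∈ N, e ∈ H.edgeSet) : IsMatchingF H N :=
  ⟨hN, fun e he f hf => hM.2 e (hNM he) f (hNM hf)⟩

theorem IsMatchingF.mono (hGH : G ≤ H) (hM : IsMatchingF G M) : IsMatchingF H M :=
  hM.of_subset subset_rfl fun e he => edgeSet_mono hGH (hM.1 e he)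

theorem IsMatchingF.insert [DecidableEq V] {e : Sym2 V} (hM : IsMatchingF G M)
    (he : e ∈ G.edgeSet) (hdisj : ∀ f ∈ M, ∀ w ∈ e, w ∉ f) : IsMatchingF G (insert e M) := by
  refine ⟨forall_mem_insert _ _ _ |>.2 ⟨he, hM.1⟩, ?_⟩
  rintro f hf g hg hfg w ⟨hwf, hwg⟩
  rcases mem_insert.1 hf with rfl | hfM <;> rcases mem_insert.1 hg with rfl | hgM
  · exact hfg rfl
  · exact hdisj g hgM w hwf hwg
  · exact hdisj f hfM w hwg hwf
  · exact hM.2 f hfM g hgM hfg w ⟨hwf, hwg⟩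

theorem IsMatchingF.card_filter_mem_le_one [DecidableEq V] (hM : IsMatchingF G M) (v : V) :
    #{e ∈ M | v ∈ e} ≤ 1 :=
  card_le_one.2 fun e he f hf => by_contra fun hef =>
    hM.2 e (mem_filter.1 he).1 f (mem_filter.1 hf).1 hef v
      ⟨(mem_filter.1 he).2, (mem_filter.1 hf).2⟩

variable [Fintype V]

theorem bddAbove_card_isMatchingF (G : SimpleGraph V) :
    BddAbove {k | ∃ M : Finset (Sym2 V), IsMatchingF G M ∧ #M = k} :=
  ⟨Fintype.card (Sym2 V), by rintro _ ⟨M, -, rfl⟩; exact card_le_univ M⟩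

theorem IsMatchingF.card_le_matchNum (hM : IsMatchingF G M) : #M ≤ matchNum G :=
  le_csSup (bddAbove_card_isMatchingF G) ⟨M, hM, rfl⟩

theorem exists_isMatchingF_card_eq_matchNum (G : SimpleGraph V) :
    ∃ M : Finset (Sym2 V), IsMatchingF G M ∧ #M = matchNum G :=
  Nat.sSup_mem (s := {k | ∃ M, IsMatchingF G M ∧ #M = k}) ⟨0, ∅, ⟨by simp, by simp⟩, rfl⟩
    (bddAbove_card_isMatchingF G)

theorem matchNum_bot : matchNum (⊥ : SimpleGraph V) = 0 := by
  obtain ⟨M, hM, hcard⟩ := exists_isMatchingF_card_eq_matchNum (⊥ : SimpleGraph V)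
  rw [← hcard, card_eq_zero, eq_empty_iff_forall_notMem]
  exact fun e he => by simpa using hM.1 e he

theorem matchNum_le_matchNum_deleteIncidenceSet_add_one [DecidableEq V] (G : SimpleGraph V)
    (v : V) :
    matchNum G ≤ matchNum (G.deleteIncidenceSet v) + 1 := by
  obtain ⟨M, hM, hcard⟩ := exists_isMatchingF_card_eq_matchNum G
  have hrest : IsMatchingF (G.deleteIncidenceSet v) {e ∈ M | v ∉ e} :=
    hM.of_subset (filter_subset _ _) fun e he => by
      obtain ⟨heM, hv⟩ := mem_filter.1 he
      rw [edgeSet_deleteIncidenceSet]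
      exact ⟨hM.1 e heM, fun h => hv h.2⟩
  calc matchNum G = #{e ∈ M | v ∈ e} + #{e ∈ M | v ∉ e} := by
        rw [card_filter_add_card_filter_not, hcard]
    _ ≤ 1 + matchNum (G.deleteIncidenceSet v) :=
        add_le_add (hM.card_filter_mem_le_one v) hrest.card_le_matchNum
    _ = matchNum (G.deleteIncidenceSet v) + 1 := add_comm _ _

theorem matchNum_deleteIncidenceSet_add_one_le [DecidableEq V] {u v : V}
    (hu : G.neighborSet u = {v}) :
    matchNum (G.deleteIncidenceSet v) + 1 ≤ matchNum G := by
  have hadj : ∀ w, G.Adj u w ↔ w = v := fun w => by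
    rw [← mem_neighborSet, hu, Set.mem_singleton_iff]
  obtain ⟨M, hM, hcard⟩ := exists_isMatchingF_card_eq_matchNum (G.deleteIncidenceSet v)
  have hnotMem : s(u, v) ∉ M := fun h => by
    simpa [deleteIncidenceSet_adj] using hM.1 _ h
  have hdisj : ∀ f ∈ M, ∀ w ∈ s(u, v), w ∉ f := by
    intro f hf w hw hwf
    obtain ⟨y, rfl⟩ := Sym2.mem_iff_exists.1 hwf
    have hwy : (G.deleteIncidenceSet v).Adj w y := hM.1 _ hf
    rw [deleteIncidenceSet_adj] at hwy
    rcases Sym2.mem_iff.1 hw with rfl | rfl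
    · exact hwy.2.2 ((hadj y).1 hwy.1)
    · exact hwy.2.1 rfl
  have := ((hM.mono (deleteIncidenceSet_le G v)).insert ((hadj v).2 rfl) hdisj).card_le_matchNum
  rwa [card_insert_of_notMem hnotMem, hcard] at this

theorem matchNum_eq_matchNum_deleteIncidenceSet_add_one [DecidableEq V] {u v : V}
    (hu : G.neighborSet u = {v}) :
    matchNum G = matchNum (G.deleteIncidenceSet v) + 1 :=
  (matchNum_le_matchNum_deleteIncidenceSet_add_one G v).antisymm
    (matchNum_deleteIncidenceSet_add_one_le hu)

end Matching

theorem Submodule.finrank_inf_ker_add_finrank {K M W : Type*} [DivisionRing K] [AddCommGroup M]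
    [Module K M] [FiniteDimensional K M] [AddCommGroup W] [Module K W] {p : Submodule K M}
    {f : M →ₗ[K] W} (hf : p.map f = ⊤) :
    finrank K ↥(p ⊓ ker f) + finrank K W = finrank K p := by
  have key := (f.domRestrict p).finrank_range_add_finrank_ker
  rw [range_domRestrict, hf, finrank_top, ker_domRestrict] at key
  have hcomap : (ker f).comap p.subtype = (p ⊓ ker f).comap p.subtype := by
    rw [Submodule.comap_inf, Submodule.comap_subtype_self, top_inf_eq]
  rw [hcomap, (Submodule.comapSubtypeEquivOfLe inf_le_left).finrank_eq] at key
  omega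

theorem Matrix.rank_add_finrank_ker_mulVecLin {K m n : Type*} [Field K] [Fintype n]
    (A : Matrix m n K) : A.rank + finrank K (ker A.mulVecLin) = Fintype.card n := by
  rw [Matrix.rank, finrank_range_add_finrank_ker, finrank_fintype_fun_eq_card]

namespace SimpleGraph

variable {V K : Type*} [Fintype V] [Field K] {G : SimpleGraph V} [DecidableRel G.Adj] {u v : V}

theorem adjMatrix_mulVec_apply_of_neighborSet_eq_singleton (hu : G.neighborSet u = {v})
    (x : V → K) : (G.adjMatrix K *ᵥ x) u = x v := by
  simp [adjMatrix_mulVec_apply, neighborFinset, hu]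

theorem adjMatrix_mulVec_single_one_of_forall_not_adj [DecidableEq V] {w : V}
    (hw : ∀ j, ¬ G.Adj w j) : G.adjMatrix K *ᵥ Pi.single w 1 = 0 := by
  ext i
  simpa using fun h => hw i h.symm

variable [DecidableEq V]

theorem adjMatrix_deleteIncidenceSet_mulVec_apply_self (x : V → K) :
    ((G.deleteIncidenceSet v).adjMatrix K *ᵥ x) v = 0 := by
  simp [mulVec, dotProduct, adjMatrix_apply, deleteIncidenceSet_adj]

theorem adjMatrix_deleteIncidenceSet_mulVec_apply_of_ne {i : V} (hi : i ≠ v) {x : V → K}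
    (hx : x v = 0) : ((G.deleteIncidenceSet v).adjMatrix K *ᵥ x) i = (G.adjMatrix K *ᵥ x) i := by
  simp only [mulVec, dotProduct, adjMatrix_apply, deleteIncidenceSet_adj]
  refine sum_congr rfl fun j _ => ?_
  by_cases hj : j = v <;> simp [hi, hj, hx]

theorem adjMatrix_mulVec_eq_zero_iff_of_neighborSet_eq_singleton (hu : G.neighborSet u = {v})
    (x : V → K) : G.adjMatrix K *ᵥ x = 0 ↔
      (G.deleteIncidenceSet v).adjMatrix K *ᵥ x = 0 ∧ x v = 0 ∧ (G.adjMatrix K *ᵥ x) v = 0 := by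
  constructor
  · intro hx
    have hxv : x v = 0 := by
      rw [← adjMatrix_mulVec_apply_of_neighborSet_eq_singleton hu x, hx, Pi.zero_apply]
    refine ⟨funext fun i => ?_, hxv, by rw [hx, Pi.zero_apply]⟩
    rcases eq_or_ne i v with rfl | hi
    · exact adjMatrix_deleteIncidenceSet_mulVec_apply_self x
    · rw [adjMatrix_deleteIncidenceSet_mulVec_apply_of_ne hi hxv, hx]
  · rintro ⟨hx, hxv, hxv'⟩
    refine funext fun i => ?_
    rcases eq_or_ne i v with rfl | hi
    · exact hxv'
    · rw [← adjMatrix_deleteIncidenceSet_mulVec_apply_of_ne hi hxv, hx]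

theorem finrank_ker_adjMatrix_deleteIncidenceSet (hu : G.neighborSet u = {v}) :
    finrank K (ker ((G.deleteIncidenceSet v).adjMatrix K).mulVecLin) =
      finrank K (ker (G.adjMatrix K).mulVecLin) + 2 := by
  have huv : G.Adj u v := by simp [← mem_neighborSet, hu]
  let ψ : (V → K) →ₗ[K] K × K :=
    (proj v).prod (proj v ∘ₗ (G.adjMatrix K).mulVecLin)
  have hker : ker ((G.deleteIncidenceSet v).adjMatrix K).mulVecLin ⊓ ker ψ =
      ker (G.adjMatrix K).mulVecLin := by
    ext x
    simp [ψ, adjMatrix_mulVec_eq_zero_iff_of_neighborSet_eq_singleton hu]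
  have hsurj : (ker ((G.deleteIncidenceSet v).adjMatrix K).mulVecLin).map ψ = ⊤ := by
    have hu' : ∀ j, ¬ (G.deleteIncidenceSet v).Adj u j := fun j h => by
      rw [deleteIncidenceSet_adj, ← mem_neighborSet, hu] at h
      exact h.2.2 h.1
    have hv' : ∀ j, ¬ (G.deleteIncidenceSet v).Adj v j := fun j h =>
      (deleteIncidenceSet_adj.1 h).2.1 rfl
    refine eq_top_iff.2 fun ⟨s, t⟩ _ => ⟨s • Pi.single v 1 + t • Pi.single u 1, ?_, ?_⟩
    · rw [SetLike.mem_coe, mem_ker, mulVecLin_apply, mulVec_add, mulVec_smul, mulVec_smul,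
        adjMatrix_mulVec_single_one_of_forall_not_adj hv',
        adjMatrix_mulVec_single_one_of_forall_not_adj hu', smul_zero, smul_zero, add_zero]
    · simp [ψ, Pi.single_apply, sum_add_distrib, huv.ne, huv.symm]
  have := Submodule.finrank_inf_ker_add_finrank hsurj
  rw [hker, finrank_prod, finrank_self] at this
  omega

theorem rank_adjMatrix_eq_rank_deleteIncidenceSet_add_two (hu : G.neighborSet u = {v}) :
    (G.adjMatrix K).rank = ((G.deleteIncidenceSet v).adjMatrix K).rank + 2 := by
  have hG := (G.adjMatrix K).rank_add_finrank_ker_mulVecLin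
  have hH := ((G.deleteIncidenceSet v).adjMatrix K).rank_add_finrank_ker_mulVecLin
  have := finrank_ker_adjMatrix_deleteIncidenceSet (K := K) hu
  omega

end SimpleGraph

theorem rank_adjMatrix_eq_two_mul_matchNum {V : Type*} [Fintype V] (K : Type*) [Field K]
    (G : SimpleGraph V) [DecidableRel G.Adj] (hG : G.IsAcyclic) :
    (G.adjMatrix K).rank = 2 * matchNum G := by
  classical
  revert hG ‹DecidableRel G.Adj›
  induction G using WellFoundedLT.induction with
  | ind G ih =>
  intro _ hG
  rcases eq_or_ne G ⊥ with rfl | hne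
  · have : (⊥ : SimpleGraph V).adjMatrix K = 0 := by ext; simp
    rw [this, Matrix.rank_zero, matchNum_bot]
  obtain ⟨u, v, hu⟩ := hG.exists_neighborSet_eq_singleton hne
  have hle := G.deleteIncidenceSet_le v
  have huv : G.Adj u v := by simp [← mem_neighborSet, hu]
  have hlt : G.deleteIncidenceSet v < G := hle.lt_of_ne fun h =>
    (deleteIncidenceSet_adj.1 (by rw [h]; exact huv)).2.2 rfl
  rw [rank_adjMatrix_eq_rank_deleteIncidenceSet_add_two hu, ih _ hlt (hG.anti hle),
    matchNum_eq_matchNum_deleteIncidenceSet_add_one hu]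
  ring

theorem tree_nullity_eq_general {V : Type*} [Fintype V]
    (G : SimpleGraph V) [DecidableRel G.Adj] (hT : G.IsTree) :
    Fintype.card V - (G.adjMatrix ℚ).rank = Fintype.card V - 2 * matchNum G := by
  rw [rank_adjMatrix_eq_two_mul_matchNum ℚ G hT.isAcyclic]

theorem tree_nullity_eq {V : Type*} [Fintype V] [DecidableEq V]
    (G : SimpleGraph V) [DecidableRel G.Adj] (hT : G.IsTree) :
    Fintype.card V - (G.adjMatrix ℚ).rank = Fintype.card V - 2 * matchNum G :=
  tree_nullity_eq_general G hT
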